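/- arXiv:2309.04866 — 2 statements merged into one kernel-verified Lean document; each statement's English description precedes it below -/
import Mathlib

section
/- Let K be a g×g symmetric positive definite integer matrix with δ = det(K), and suppose K·n = d·e for some positive integer vector n and d ∈ ℕ, with ρ = nδ/d ∈ ℤ (where n is the sum of entries of n). Let u = K⁻¹e ∈ ℚ^g. If gcd(δ, ρ) = 1, then the class of u generates the finite abelian group Π = K⁻¹ℤ^g / ℤ^g, i.e., u has order δ in Π. -/
/-!
The class of `u = K⁻¹e` is killed by `δ = det K` because `δ K⁻¹ = adj K` is integral.
Conversely, `Kn = de` gives `u = n/d`, so the entries of `u` sum to `(∑ nᵢ)/d = ρ/δ`;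
if `m u` is integral then so is `mρ/δ`, and `gcd(δ, ρ) = 1` forces `δ ∣ m`.
-/

open Matrix

def integerLattice (ι : Type*) : AddSubgroup (ι → ℚ) :=
  AddSubgroup.pi Set.univ fun _ => AddSubgroup.zmultiples 1

lemma mem_integerLattice {ι : Type*} {v : ι → ℚ} :
    v ∈ integerLattice ι ↔ ∀ i, ∃ k : ℤ, (k : ℚ) = v i := by
  simp [integerLattice, AddSubgroup.mem_pi, AddSubgroup.mem_zmultiples_iff]

lemma exists_intCast_eq_sum_of_mem_integerLattice {ι : Type*} [Fintype ι] {v : ι → ℚ}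
    (hv : v ∈ integerLattice ι) : ∃ k : ℤ, (k : ℚ) = ∑ i, v i := by
  choose k hk using mem_integerLattice.1 hv
  exact ⟨∑ i, k i, by push_cast; simp only [hk]⟩

lemma det_smul_inv_mulVec_mem_integerLattice {ι : Type*} [Fintype ι] [DecidableEq ι]
    (K : Matrix ι ι ℤ) (v : ι → ℤ) :
    K.det • ((K.map (Int.cast : ℤ → ℚ))⁻¹ *ᵥ fun i => (v i : ℚ)) ∈ integerLattice ι := by
  by_cases hK : K.det = 0
  · simp [hK, zero_mem]
  have hadj : (K.map (Int.cast : ℤ → ℚ)).adjugate = K.adjugate.map Int.cast :=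
    ((Int.castRingHom ℚ).map_adjugate K).symm
  rw [← Int.cast_smul_eq_zsmul ℚ, inv_def, ← Int.cast_det, Ring.inverse_eq_inv, smul_mulVec,
    smul_smul, mul_inv_cancel₀ (by exact_mod_cast hK), one_smul, hadj, mem_integerLattice]
  intro i
  exact ⟨(K.adjugate *ᵥ v) i, by simp [mulVec, dotProduct]⟩

lemma addOrderOf_mk_eq_natAbs {G : Type*} [AddGroup G] (H : AddSubgroup G) [H.Normal] (x : G)
    (δ : ℤ) (h : ∀ m : ℤ, m • x ∈ H ↔ δ ∣ m) :
    addOrderOf (QuotientAddGroup.mk x : G ⧸ H) = δ.natAbs := by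
  have key : ∀ m : ℤ, (addOrderOf (QuotientAddGroup.mk x : G ⧸ H) : ℤ) ∣ m ↔ δ ∣ m := fun m => by
    rw [addOrderOf_dvd_iff_zsmul_eq_zero, ← QuotientAddGroup.mk_zsmul,
      QuotientAddGroup.eq_zero_iff, h]
  exact Int.natAbs_eq_of_dvd_dvd ((key δ).2 dvd_rfl) ((key _).1 dvd_rfl)

lemma sum_inv_mulVec_one_eq_div {ι : Type*} [Fintype ι] [DecidableEq ι] (K : Matrix ι ι ℤ)
    (hK : K.det ≠ 0) (n : ι → ℤ) {d ρ : ℤ} (hd : d ≠ 0) (hKn : K *ᵥ n = fun _ => d)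
    (hρ : (∑ i, n i) * K.det = d * ρ) :
    ∑ i, ((K.map (Int.cast : ℤ → ℚ))⁻¹ *ᵥ fun _ => (1 : ℚ)) i = ρ / K.det := by
  have hdet : IsUnit (K.map (Int.cast : ℤ → ℚ)).det := by
    rw [← Int.cast_det]; exact isUnit_iff_ne_zero.2 (Int.cast_ne_zero.2 hK)
  have hsol : K.map (Int.cast : ℤ → ℚ) *ᵥ ((d : ℚ)⁻¹ • fun i => (n i : ℚ)) = fun _ => 1 := by
    funext j
    have hj : (d : ℚ) = (K.map (Int.cast : ℤ → ℚ) *ᵥ fun i => (n i : ℚ)) j := by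
      simpa [hKn, Function.comp_def] using (Int.castRingHom ℚ).map_mulVec K n j
    rw [mulVec_smul, Pi.smul_apply, smul_eq_mul, ← hj, inv_mul_cancel₀ (Int.cast_ne_zero.2 hd)]
  rw [← hsol, mulVec_mulVec, nonsing_inv_mul _ hdet, one_mulVec]
  have hρQ : (∑ i, (n i : ℚ)) * K.det = d * ρ := by exact_mod_cast hρ
  simp only [Pi.smul_apply, smul_eq_mul, ← Finset.mul_sum]
  field_simp
  linear_combination hρQ

lemma dvd_of_intCast_eq_mul_div {δ ρ m k : ℤ} (hδ : δ ≠ 0) (hcop : IsCoprime δ ρ)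
    (h : (k : ℚ) = m * (ρ / δ)) : δ ∣ m := by
  refine hcop.dvd_of_dvd_mul_right ⟨k, ?_⟩
  have : (m * ρ : ℚ) = δ * k := by rw [h]; field_simp
  exact_mod_cast this

theorem wen_u_generates_general (g : ℕ) (K : Matrix (Fin g) (Fin g) ℤ)
    (n : Fin g → ℕ) (d : ℕ) (hd : 0 < d)
    (hKn : K.mulVec (fun i => (n i : ℤ)) = fun _ => (d : ℤ))
    (ρ : ℤ) (hρ : (∑ i, (n i : ℤ)) * K.det = (d : ℤ) * ρ)
    (hcop : Int.gcd K.det ρ = 1)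
    (u : Fin g → ℚ)
    (hu : u = (K.map (Int.cast : ℤ → ℚ))⁻¹.mulVec (fun _ => (1 : ℚ)))
    (L : AddSubgroup (Fin g → ℚ))
    (hL : L = AddSubgroup.pi Set.univ fun _ => AddSubgroup.zmultiples (1 : ℚ)) :
    addOrderOf (QuotientAddGroup.mk u : (Fin g → ℚ) ⧸ L) = K.det.natAbs := by
  subst hu hL
  have hd₀ : (d : ℤ) ≠ 0 := by exact_mod_cast hd.ne'
  have hδ : K.det ≠ 0 := by
    intro h
    rw [h, mul_zero, eq_comm, mul_eq_zero, or_iff_right hd₀] at hρ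
    simp [h, hρ] at hcop
  have hsum := sum_inv_mulVec_one_eq_div K hδ _ hd₀ hKn hρ
  refine addOrderOf_mk_eq_natAbs (integerLattice _) _ _ fun m => ⟨fun hm => ?_, ?_⟩
  · obtain ⟨k, hk⟩ := exists_intCast_eq_sum_of_mem_integerLattice hm
    simp only [Pi.smul_apply, zsmul_eq_mul, ← Finset.mul_sum, hsum] at hk
    exact dvd_of_intCast_eq_mul_div hδ (Int.isCoprime_iff_gcd_eq_one.2 hcop) hk
  · rintro ⟨c, rfl⟩
    rw [mul_comm, mul_zsmul]
    exact zsmul_mem (det_smul_inv_mulVec_mem_integerLattice K 1) c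

/-- If `(K, n)` is a Wen datum with `ρ = nδ/d` coprime to `δ = det K`, then the
class of `u = K⁻¹e` generates the group `Π = K⁻¹ℤ^g/ℤ^g`, i.e. it has order `δ`
in `ℚ^g/ℤ^g`. -/
theorem wen_u_generates (g : ℕ) (K : Matrix (Fin g) (Fin g) ℤ)
    (hsym : K.IsSymm) (hpos : (K.map (Int.cast : ℤ → ℝ)).PosDef)
    (n : Fin g → ℕ) (hn : ∀ i, 0 < n i) (d : ℕ) (hd : 0 < d)
    (hKn : K.mulVec (fun i => (n i : ℤ)) = fun _ => (d : ℤ))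
    (ρ : ℤ) (hρ : (∑ i, (n i : ℤ)) * K.det = (d : ℤ) * ρ)
    (hcop : Int.gcd K.det ρ = 1)
    (u : Fin g → ℚ)
    (hu : u = (K.map (Int.cast : ℤ → ℚ))⁻¹.mulVec (fun _ => (1 : ℚ)))
    (L : AddSubgroup (Fin g → ℚ))
    (hL : L = AddSubgroup.pi Set.univ fun _ => AddSubgroup.zmultiples (1 : ℚ)) :
    addOrderOf (QuotientAddGroup.mk u : (Fin g → ℚ) ⧸ L) = K.det.natAbs :=
  wen_u_generates_general g K n d hd hKn ρ hρ hcop u hu L hL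
end

section
/- Let τ = s + it with t ≠ 0, K a g×g symmetric positive definite integer matrix, Ω = τK, and Γ = ℤ^g + Ωℤ^g ⊂ ℂ^g. Identify the antidual V‡ = Hom_{ℂ̄}(ℂ^g, ℂ) with ℂ^g via the basis (σ₁,…,σ_g) where σ_j(λ) = conj(λ_j), and equip V‡ × ℂ^g with the real pairing ⟨l, v⟩ = Im(l(v)). Then the dual lattice Γ‡ = { l ∈ V‡ : ⟨l, γ⟩ ∈ ℤ for all γ ∈ Γ } equals (1/t)(K⁻¹ℤ^g + τℤ^g) under this identification. -/
/-!
Write a lattice vector as `v = m + τ K n` with `m n ∈ ℤ^g`. For `w ∈ ℂ^g` put `c_j = Im(τ conj w_j)`;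
then `Im (∑ w_j conj v_j) = ⟨Im w, m⟩ - ⟨K c, n⟩`, using `K = Kᵀ`. As `ℤ^g` is self-dual for the dot
product, `w` lies in the dual lattice iff `Im w ∈ ℤ^g` and `K c ∈ ℤ^g`, i.e. `c ∈ K⁻¹ℤ^g`. Finally, as
`t ≠ 0`, a vector `w` equals `(1/t)(d + τ n)` with `d n` real iff `Im w = n` and `c = d`.
-/

open Complex Matrix

open scoped ComplexConjugate

theorem im_mul_conj_ofReal_add_mul_ofReal (w τ : ℂ) (x y : ℝ) :
    (w * conj (x + τ * y)).im = x * w.im - y * (τ * conj w).im := by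
  simp only [map_add, map_mul, conj_ofReal, mul_im, mul_re, add_im, add_re, ofReal_re,
    ofReal_im, conj_re, conj_im]
  ring

theorem eq_inv_im_mul_ofReal_add_mul_iff {τ : ℂ} (hτ : τ.im ≠ 0) (w : ℂ) (d n : ℝ) :
    w = 1 / (τ.im : ℂ) * (d + τ * n) ↔ w.im = n ∧ (τ * conj w).im = d := by
  have hτ' : (τ.im : ℂ) ≠ 0 := ofReal_ne_zero.2 hτ
  rw [← ofReal_one, ← ofReal_div]
  constructor
  · rintro rfl
    simp only [map_mul, map_add, conj_ofReal, mul_im, mul_re, add_im, add_re, ofReal_re,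
      ofReal_im, conj_re, conj_im]
    constructor <;> field_simp <;> ring
  · rintro ⟨h1, h2⟩
    simp only [mul_im, conj_re, conj_im] at h2
    apply Complex.ext
    · simp only [mul_re, add_re, add_im, mul_im, ofReal_re, ofReal_im]
      field_simp
      linear_combination h2 + τ.re * h1
    · simp only [mul_re, mul_im, add_re, add_im, ofReal_re, ofReal_im]
      field_simp
      linear_combination τ.im * h1

theorem eq_fun_inv_im_mul_ofReal_add_mul_iff {ι : Type*} {τ : ℂ} (hτ : τ.im ≠ 0) (w : ι → ℂ)
    (d n : ι → ℝ) :
    (w = fun j => 1 / (τ.im : ℂ) * ((d j : ℂ) + τ * (n j : ℂ))) ↔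
      (fun j => (w j).im) = n ∧ (fun j => (τ * conj (w j)).im) = d := by
  simp only [funext_iff, eq_inv_im_mul_ofReal_add_mul_iff hτ, forall_and]

section DotProduct
variable {ι : Type*} [Fintype ι]

theorem forall_exists_int_dotProduct_intCast_iff [DecidableEq ι] (x : ι → ℝ) :
    (∀ n : ι → ℤ, ∃ z : ℤ, x ⬝ᵥ (fun i => (n i : ℝ)) = z) ↔
      ∃ u : ι → ℤ, x = fun i => (u i : ℝ) := by
  constructor
  · intro h
    choose u hu using fun i => h (Pi.single i 1)
    refine ⟨u, funext fun i => ?_⟩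
    rw [← hu i]
    simp [dotProduct, Pi.single_apply]
  · rintro ⟨u, rfl⟩ n
    exact ⟨∑ i, u i * n i, by simp [dotProduct]⟩

theorem forall_exists_int_dotProduct_sub_dotProduct_iff [DecidableEq ι] (x y : ι → ℝ) :
    (∀ m n : ι → ℤ, ∃ z : ℤ, x ⬝ᵥ (fun i => (m i : ℝ)) - y ⬝ᵥ (fun i => (n i : ℝ)) = z) ↔
      (∃ u : ι → ℤ, x = fun i => (u i : ℝ)) ∧ ∃ u : ι → ℤ, y = fun i => (u i : ℝ) := by
  rw [← forall_exists_int_dotProduct_intCast_iff x, ← forall_exists_int_dotProduct_intCast_iff y]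
  constructor
  · intro h
    refine ⟨fun m => by simpa using h m 0, fun n => ?_⟩
    obtain ⟨z, hz⟩ := h 0 n
    exact ⟨-z, by simpa [neg_eq_iff_eq_neg] using hz⟩
  · rintro ⟨hx, hy⟩ m n
    obtain ⟨a, ha⟩ := hx m
    obtain ⟨b, hb⟩ := hy n
    exact ⟨a - b, by rw [ha, hb]; push_cast; rfl⟩

theorem im_sum_mul_conj_add_smul_mulVec (w : ι → ℂ) (τ : ℂ) (A : Matrix ι ι ℝ) (x y : ι → ℝ) :
    (∑ j, w j * conj ((x j : ℂ) + ((τ • A.map ofReal) *ᵥ fun i => (y i : ℂ)) j)).im =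
      (fun j => (w j).im) ⬝ᵥ x - ((fun j => (τ * conj (w j)).im) ᵥ* A) ⬝ᵥ y := by
  have hAy : ∀ j, ((τ • A.map ofReal) *ᵥ fun i => (y i : ℂ)) j = τ * ((A *ᵥ y) j : ℂ) := by
    intro j
    rw [smul_mulVec, Pi.smul_apply, smul_eq_mul, ← ofRealHom_eq_coe, RingHom.map_mulVec]
    rfl
  simp only [hAy, im_sum, im_mul_conj_ofReal_add_mul_ofReal, Finset.sum_sub_distrib,
    ← dotProduct_mulVec]
  simp only [dotProduct, mul_comm]

theorem mulVec_eq_intCast_iff [DecidableEq ι] (K : Matrix ι ι ℤ) (hK : K.det ≠ 0) (c : ι → ℝ)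
    (u : ι → ℤ) :
    K.map (Int.cast : ℤ → ℝ) *ᵥ c = (fun i => (u i : ℝ)) ↔
      c = fun j => (((K.map (Int.cast : ℤ → ℚ))⁻¹ *ᵥ fun i => (u i : ℚ)) j : ℝ) := by
  set Kq := K.map (Int.cast : ℤ → ℚ)
  have hKq : IsUnit Kq.det := by
    rw [← Int.cast_det]; exact isUnit_iff_ne_zero.2 (by exact_mod_cast hK)
  have hKr : IsUnit (K.map (Int.cast : ℤ → ℝ)).det := by
    rw [← Int.cast_det]; exact isUnit_iff_ne_zero.2 (by exact_mod_cast hK)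
  have hmap : K.map (Int.cast : ℤ → ℝ) = Kq.map (Rat.castHom ℝ) := by
    ext; simp [Kq]
  have hsol : K.map (Int.cast : ℤ → ℝ) *ᵥ (fun j => ((Kq⁻¹ *ᵥ fun i => (u i : ℚ)) j : ℝ)) =
      fun i => (u i : ℝ) := by
    funext i
    have := RingHom.map_mulVec (Rat.castHom ℝ) Kq (Kq⁻¹ *ᵥ fun i => (u i : ℚ)) i
    rw [mulVec_mulVec, mul_nonsing_inv _ hKq, one_mulVec] at this
    simpa [hmap, Function.comp_def] using this.symm
  rw [← hsol]
  exact (mulVec_injective_iff_isUnit.2 ((isUnit_iff_isUnit_det _).2 hKr)).eq_iff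
end DotProduct

/-- Dual lattice computation: for `τ = s + it` with `t ≠ 0`, `K` symmetric
positive definite integral and `Ω = τK`, the dual lattice of
`Γ = ℤ^g + Ωℤ^g ⊂ ℂ^g` with respect to the pairing `⟨l, v⟩ = Im(l(v))`
(identifying the antidual of `ℂ^g` with `ℂ^g` via the basis `σ_j(λ) = conj λ_j`,
so `l(v) = Σ_j w_j conj(v_j)`) equals `(1/t)(K⁻¹ℤ^g + τℤ^g)`. -/
theorem dual_lattice_computation (g : ℕ) (τ : ℂ) (hτ : τ.im ≠ 0)
    (K : Matrix (Fin g) (Fin g) ℤ) (hsym : K.IsSymm)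
    (hpos : (K.map (Int.cast : ℤ → ℝ)).PosDef)
    (Ω : Matrix (Fin g) (Fin g) ℂ) (hΩ : Ω = τ • K.map (Int.cast : ℤ → ℂ)) :
    {w : Fin g → ℂ | ∀ v : Fin g → ℂ,
        (∃ m n : Fin g → ℤ,
          v = fun i => (m i : ℂ) + Ω.mulVec (fun j => (n j : ℂ)) i) →
        ∃ z : ℤ, (∑ j, w j * (starRingEnd ℂ) (v j)).im = z}
      = {w : Fin g → ℂ | ∃ u n : Fin g → ℤ,
          w = fun j => (1 / (τ.im : ℂ)) *
            ((((K.map (Int.cast : ℤ → ℚ))⁻¹.mulVec (fun i => (u i : ℚ)) j : ℚ) : ℂ)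
              + τ * (n j : ℂ))} := by
  have hdet : K.det ≠ 0 := by
    have := hpos.det_pos.ne'
    rwa [← Int.cast_det, Int.cast_ne_zero] at this
  have hΩr : Ω = τ • (K.map (Int.cast : ℤ → ℝ)).map ofReal := by
    rw [hΩ, Matrix.map_map]; simp [Function.comp_def]
  ext w
  simp only [Set.mem_ofPred_eq, forall_exists_index]
  rw [forall_comm]
  simp only [forall_comm (α := Fin g → ℂ), forall_eq]
  simp only [hΩr, ← ofReal_intCast, im_sum_mul_conj_add_smul_mulVec]
  rw [forall_exists_int_dotProduct_sub_dotProduct_iff]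
  have hKr : ∀ c : Fin g → ℝ, c ᵥ* K.map Int.cast = K.map Int.cast *ᵥ c := fun c => by
    rw [← vecMul_transpose, (hsym.map _).eq]
  simp only [hKr, mulVec_eq_intCast_iff K hdet, ← ofReal_ratCast,
    eq_fun_inv_im_mul_ofReal_add_mul_iff hτ]
  exact ⟨fun ⟨⟨n, hn⟩, u, hu⟩ => ⟨u, n, hn, hu⟩, fun ⟨u, n, hn, hu⟩ => ⟨⟨n, hn⟩, u, hu⟩⟩
end
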